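/- Let $k \in \mathbb{N}$, let $m \in \mathbb{N}$ be even, and let $h_1, \ldots, h_m \in \mathbb{Z}$ with $\gcd(h_j, k) = 1$ and multiplicative inverses $h_j'$ mod $k$. Then $\sum_{a_1+\cdots+a_m \equiv 0 \pmod{k}} ((a_1 h_1/k)) \cdots ((a_m h_m/k)) = \frac{(-1)^{m/2}}{2^m k} \sum_{a=1}^{k-1} \cot(\pi a h_1'/k) \cdots \cot(\pi a h_m'/k)$. -/

import Mathlib

open scoped Classical

/-- The sawtooth function `((x))`. -/
noncomputable def saw (x : ℝ) : ℝ :=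
  if ∃ m : ℤ, x = m then 0 else Int.fract x - 1 / 2

/-- The cotangent function. -/
noncomputable def cot (x : ℝ) : ℝ := Real.cos x / Real.sin x

/-!
Detect the congruence `∑ aⱼ ≡ 0 (mod k)` with the additive characters `x ↦ e(cx/k)` of
`ZMod k`: the left side becomes `k⁻¹ ∑_c ∏ⱼ ŝⱼ(c)` with `ŝⱼ(c) = ∑_x ((x hⱼ/k)) e(cx/k)`.
Substituting `x = y h'ⱼ` turns `ŝⱼ(c)` into the Fourier coefficient of `y ↦ ((y/k))` at
`c h'ⱼ`. That coefficient is `0` at frequency `0` (the sawtooth is odd), and otherwise a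
weighted geometric sum equal to `(w + 1) / (2 (w - 1)) = -(i/2) cot(π c h'ⱼ/k)`, where
`w = e(c h'ⱼ/k)`. So only `c ≠ 0` contributes, and for even `m` the factor `(-i/2)^m` is
`(-1)^(m/2) / 2^m`.
-/

open Finset
open ZMod (stdAddChar)
open scoped Real

lemma AddChar.map_sum_eq_prod {A M ι : Type*} [AddCommMonoid A] [CommMonoid M]
    (ψ : AddChar A M) (s : Finset ι) (f : ι → A) : ψ (∑ i ∈ s, f i) = ∏ i ∈ s, ψ (f i) := by
  induction s using Finset.cons_induction with
  | empty => simp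
  | cons a s _ ih => rw [sum_cons, prod_cons, AddChar.map_add_eq_mul, ih]

lemma sum_mul_addChar_comp_mul_right {R S : Type*} [CommRing R] [Fintype R] [CommRing S]
    (ψ : AddChar R S) (g : R → S) {u v : R} (huv : v * u = 1) (c : R) :
    ∑ x, g (x * u) * ψ (c * x) = ∑ y, g y * ψ (y * (c * v)) := by
  rw [← Equiv.sum_comp (Units.mulRight (Units.mkOfMulEqOne v u huv))]
  refine sum_congr rfl fun y _ => ?_
  simp only [Units.mulRight_apply, Units.val_mkOfMulEqOne]
  rw [mul_assoc, huv, mul_one, mul_left_comm]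

lemma sum_filter_sum_eq_zero_prod {R K ι : Type*} [CommRing R] [Fintype R] [DecidableEq R]
    [Field K] [CharZero K] [Fintype ι] [DecidableEq ι] {ψ : AddChar R K} (hψ : ψ.IsPrimitive)
    (f : ι → R → K) :
    ∑ a ∈ univ.filter (fun a : ι → R => ∑ j, a j = 0), ∏ j, f j (a j)
      = (Fintype.card R : K)⁻¹ * ∑ c : R, ∏ j, ∑ x, f j x * ψ (c * x) := by
  have hcard : (Fintype.card R : K) ≠ 0 := Nat.cast_ne_zero.2 Fintype.card_ne_zero
  have indicator : ∀ a : ι → R, (if ∑ j, a j = 0 then (1 : K) else 0)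
      = (Fintype.card R : K)⁻¹ * ∑ c, ψ (c * ∑ j, a j) := fun a => by
    rw [AddChar.sum_mulShift _ hψ]
    split_ifs <;> simp [hcard]
  have term : ∀ a : ι → R, (if ∑ j, a j = 0 then ∏ j, f j (a j) else 0)
      = (Fintype.card R : K)⁻¹ * ∑ c, ∏ j, f j (a j) * ψ (c * a j) := fun a => by
    rw [← one_mul (∏ j, f j (a j)), ← ite_zero_mul, indicator, mul_assoc, sum_mul]
    refine congrArg _ (sum_congr rfl fun c _ => ?_)
    rw [mul_sum, AddChar.map_sum_eq_prod, prod_mul_distrib, mul_comm]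
  rw [sum_filter, sum_congr rfl fun a _ => term a, ← mul_sum, sum_comm]
  simp_rw [Fintype.prod_sum]

lemma sum_range_natCast_mul_pow_of_pow_eq_one {K : Type*} [Field K] {k : ℕ} {w : K}
    (hwk : w ^ k = 1) (hw : w ≠ 1) : ∑ i ∈ range k, (i : K) * w ^ i = k / (w - 1) := by
  have hw' : w - 1 ≠ 0 := sub_ne_zero.2 hw
  have telescope : ∀ i ∈ range k, (i : K) * w ^ i * (w - 1)
      = (((i + 1 : ℕ) : K) * w ^ (i + 1) - i * w ^ i) - w ^ (i + 1) := fun i _ => by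
    push_cast; ring
  have hgeom : ∑ i ∈ range k, w ^ (i + 1) = 0 := by
    simp_rw [pow_succ, ← sum_mul, geom_sum_eq hw, hwk, sub_self, zero_div, zero_mul]
  rw [eq_div_iff hw', sum_mul, sum_congr rfl telescope, sum_sub_distrib,
    sum_range_sub (fun i => (i : K) * w ^ i), hgeom, hwk]
  simp

lemma neg_I_div_two_pow_of_even {m : ℕ} (hm : Even m) :
    (-(Complex.I / 2)) ^ m = (-1) ^ (m / 2) / 2 ^ m := by
  obtain ⟨t, rfl⟩ := hm
  have hsq : (-(Complex.I / 2)) ^ 2 = -1 / 2 ^ 2 := by rw [neg_sq, div_pow, Complex.I_sq]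
  rw [← two_mul, Nat.mul_div_cancel_left t two_pos, pow_mul, hsq, div_pow, ← pow_mul]

section ZMod

variable {k : ℕ} [NeZero k]

lemma ZMod.finEquiv_apply (i : Fin k) : ZMod.finEquiv k i = (i : ℕ) := by
  obtain ⟨n, rfl⟩ := Nat.exists_eq_succ_of_ne_zero (NeZero.ne k)
  exact (Fin.cast_val_eq_self i).symm

lemma ZMod.sum_eq_sum_range {M : Type*} [AddCommMonoid M] (g : ZMod k → M) :
    ∑ x, g x = ∑ i ∈ range k, g i := by
  rw [← (ZMod.finEquiv k).toEquiv.sum_comp, ← Fin.sum_univ_eq_sum_range]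
  simp [ZMod.finEquiv_apply]

lemma sum_filter_fin_eq_sum_filter_zmod {ι R : Type*} [Fintype ι] [DecidableEq ι]
    [AddCommMonoid R] (F : (ι → ZMod k) → R) :
    ∑ a ∈ univ.filter (fun a : ι → Fin k => (∑ j, (a j : ℕ)) % k = 0), F (fun j => (a j : ℕ))
      = ∑ a ∈ univ.filter (fun a : ι → ZMod k => ∑ j, a j = 0), F a := by
  rw [sum_filter, sum_filter]
  refine Fintype.sum_equiv (Equiv.piCongrRight fun _ => (ZMod.finEquiv k).toEquiv) _ _
    fun a => ?_
  have hcast : (fun j => ((a j : ℕ) : ZMod k))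
      = Equiv.piCongrRight (fun _ => (ZMod.finEquiv k).toEquiv) a := by
    ext j
    simp [ZMod.finEquiv_apply]
  rw [← hcast]
  refine if_congr ?_ rfl rfl
  rw [← Nat.dvd_iff_mod_eq_zero, ← ZMod.natCast_eq_zero_iff, Nat.cast_sum]

end ZMod

lemma cot_eq_real_cot (x : ℝ) : cot x = Real.cot x := (Real.cot_eq_cos_div_sin x).symm

lemma saw_eq_ite_fract (x : ℝ) :
    saw x = if Int.fract x = 0 then 0 else Int.fract x - 1 / 2 := by
  have hint : (∃ m : ℤ, x = m) ↔ Int.fract x = 0 := by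
    rw [Int.fract_eq_zero_iff]
    exact ⟨fun ⟨m, hm⟩ => ⟨m, hm.symm⟩, fun ⟨m, hm⟩ => ⟨m, hm.symm⟩⟩
  simp only [saw, hint]

lemma saw_add_intCast (x : ℝ) (n : ℤ) : saw (x + n) = saw x := by
  simp only [saw_eq_ite_fract, Int.fract_add_intCast]

lemma saw_neg (x : ℝ) : saw (-x) = -saw x := by
  simp only [saw_eq_ite_fract, Int.fract_neg_eq_zero]
  split_ifs with hx
  · simp
  · rw [Int.fract_neg hx]; ring

lemma saw_natCast_div_of_lt {k i : ℕ} (hi : i < k) :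
    saw (i / k) = i / k - 1 / 2 + if i = 0 then 1 / 2 else 0 := by
  have hk : (0 : ℝ) < k := by exact_mod_cast (Nat.zero_le i).trans_lt hi
  have hfract : Int.fract ((i : ℝ) / k) = i / k :=
    Int.fract_eq_self.2 ⟨by positivity, (div_lt_one hk).2 (by exact_mod_cast hi)⟩
  rw [saw_eq_ite_fract, hfract]
  rcases Nat.eq_zero_or_pos i with rfl | hi0
  · simp
  · have : (i : ℝ) / k ≠ 0 := by positivity
    simp [this, hi0.ne']

lemma sum_range_saw_div_mul_pow {k : ℕ} (hk : 0 < k) {w : ℂ} (hwk : w ^ k = 1)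
    (hw : w ≠ 1) :
    ∑ i ∈ range k, (saw (i / k) : ℂ) * w ^ i = (w + 1) / (2 * (w - 1)) := by
  have hsaw : ∀ i ∈ range k, (saw (i / k) : ℂ) * w ^ i
      = (k : ℂ)⁻¹ * (i * w ^ i) - 2⁻¹ * w ^ i + if i = 0 then 2⁻¹ else 0 := fun i hi => by
    rw [saw_natCast_div_of_lt (mem_range.1 hi)]
    split_ifs with h0
    · subst h0; simp
    · push_cast; ring
  have hkC : (k : ℂ) ≠ 0 := Nat.cast_ne_zero.2 hk.ne'
  have hw' : w - 1 ≠ 0 := sub_ne_zero.2 hw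
  rw [sum_congr rfl hsaw, sum_add_distrib, sum_sub_distrib, ← mul_sum, ← mul_sum,
    sum_range_natCast_mul_pow_of_pow_eq_one hwk hw, geom_sum_eq hw, hwk, sum_ite_eq',
    if_pos (mem_range.2 hk)]
  field_simp
  ring

noncomputable def sawMod {k : ℕ} (x : ZMod k) : ℝ := saw (x.val / k)

section sawMod

variable {k : ℕ} [NeZero k]

lemma sawMod_intCast (n : ℤ) : sawMod (n : ZMod k) = saw (n / k) := by
  have hk : (k : ℝ) ≠ 0 := Nat.cast_ne_zero.2 (NeZero.ne k)
  have hval : ((n : ZMod k).val : ℝ) = n - k * ((n / k : ℤ) : ℝ) := by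
    have := ZMod.val_intCast (n := k) n
    rw [Int.emod_def] at this
    exact_mod_cast this
  rw [sawMod, hval, sub_div, mul_div_cancel_left₀ _ hk, sub_eq_add_neg, ← Int.cast_neg,
    saw_add_intCast]

lemma sawMod_natCast_mul_intCast (a : ℕ) (b : ℤ) :
    sawMod ((a : ZMod k) * (b : ZMod k)) = saw (a * b / k) := by
  simpa using sawMod_intCast (k := k) (a * b)

lemma sawMod_neg (x : ZMod k) : sawMod (-x) = -sawMod x := by
  have hx : x = ((x.val : ℤ) : ZMod k) := by simp
  rw [hx, ← Int.cast_neg, sawMod_intCast, sawMod_intCast, Int.cast_neg, neg_div, saw_neg]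

lemma sum_sawMod : ∑ x : ZMod k, sawMod x = 0 := by
  have h := Equiv.sum_comp (Equiv.neg (ZMod k)) sawMod
  simp only [Equiv.neg_apply, sawMod_neg, sum_neg_distrib] at h
  linarith

lemma sum_sawMod_mul_stdAddChar (n : ℤ) (hn : (n : ZMod k) ≠ 0) :
    ∑ y : ZMod k, (sawMod y : ℂ) * stdAddChar (y * (n : ZMod k))
      = -(Complex.I / 2) * (cot (π * n / k) : ℂ) := by
  set w := stdAddChar (n : ZMod k) with hw
  have hwk : w ^ k = 1 := by
    rw [hw, ← AddChar.map_nsmul_eq_pow, nsmul_eq_mul, ZMod.natCast_self, zero_mul,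
      AddChar.map_zero_eq_one]
  have hw1 : w ≠ 1 := by
    rwa [hw, ← AddChar.map_zero_eq_one (stdAddChar (N := k)), ZMod.injective_stdAddChar.ne_iff]
  have hw' : w - 1 ≠ 0 := sub_ne_zero.2 hw1
  have hw'' : 1 - w ≠ 0 := sub_ne_zero.2 (Ne.symm hw1)
  have hexp : Complex.exp (2 * π * Complex.I * (n / k)) = w := by
    rw [hw, ZMod.stdAddChar_coe, mul_div_assoc]
  calc ∑ y : ZMod k, (sawMod y : ℂ) * stdAddChar (y * (n : ZMod k))
      = ∑ i ∈ range k, (saw (i / k) : ℂ) * w ^ i := by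
        rw [ZMod.sum_eq_sum_range]
        refine sum_congr rfl fun i hi => ?_
        rw [sawMod, ZMod.val_natCast_of_lt (mem_range.1 hi), ← nsmul_eq_mul,
          AddChar.map_nsmul_eq_pow]
    _ = (w + 1) / (2 * (w - 1)) := sum_range_saw_div_mul_pow (Nat.pos_of_neZero k) hwk hw1
    _ = -(Complex.I / 2) * (cot (π * n / k) : ℂ) := by
        have harg : ((π * n / k : ℝ) : ℂ) = π * ((n : ℂ) / k) := by push_cast; ring
        rw [cot_eq_real_cot, Complex.ofReal_cot, harg, Complex.cot_pi_eq_exp_ratio, hexp]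
        field_simp
        ring

lemma sum_prod_sum_sawMod_mul_stdAddChar {ι : Type*} [Fintype ι] [Nonempty ι] (v : ι → ℤ)
    (hv : ∀ j, IsUnit (v j : ZMod k)) :
    ∑ c : ZMod k, ∏ j, ∑ y, (sawMod y : ℂ) * stdAddChar (y * (c * (v j : ZMod k)))
      = (-(Complex.I / 2)) ^ Fintype.card ι *
          ∑ a ∈ Icc 1 (k - 1), ∏ j, (cot (π * a * v j / k) : ℂ) := by
  have hrange : range k = insert 0 (Icc 1 (k - 1)) := by
    ext i
    simp only [mem_range, mem_insert, mem_Icc]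
    have := Nat.pos_of_neZero k
    omega
  have hzero : ∏ j, ∑ y : ZMod k,
      (sawMod y : ℂ) * stdAddChar (y * (((0 : ℕ) : ZMod k) * (v j : ZMod k))) = 0 := by
    refine prod_eq_zero (mem_univ (Classical.arbitrary ι)) ?_
    simp only [Nat.cast_zero, zero_mul, mul_zero, AddChar.map_zero_eq_one, mul_one]
    exact_mod_cast sum_sawMod
  rw [ZMod.sum_eq_sum_range, hrange, sum_insert (by simp), hzero, zero_add, mul_sum]
  refine sum_congr rfl fun a ha => ?_
  have ha0 : (a : ZMod k) ≠ 0 := by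
    rw [mem_Icc] at ha
    rw [Ne, ZMod.natCast_eq_zero_iff]
    exact Nat.not_dvd_of_pos_of_lt (by omega) (by omega)
  rw [← card_univ, ← prod_const, ← prod_mul_distrib]
  refine prod_congr rfl fun j _ => ?_
  have hn : ((a * v j : ℤ) : ZMod k) ≠ 0 := by
    push_cast
    rwa [Ne, (hv j).mul_left_eq_zero]
  have key := sum_sawMod_mul_stdAddChar _ hn
  push_cast at key
  rw [key, mul_assoc]

end sawMod

theorem zagier_higher_dedekind_general (k m : ℕ) (hk : 0 < k) (hm : 0 < m) (hme : Even m)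
    (h h' : Fin m → ℤ)
    (hinv : ∀ j, h j * h' j ≡ 1 [ZMOD (k : ℤ)]) :
    ∑ a ∈ Finset.univ.filter (fun a : Fin m → Fin k => (∑ j, (a j : ℕ)) % k = 0),
        ∏ j, saw ((a j : ℕ) * (h j : ℝ) / k)
      = (-1 : ℝ) ^ (m / 2) / (2 ^ m * k) *
          ∑ a ∈ Finset.Icc 1 (k - 1), ∏ j, cot (Real.pi * a * (h' j : ℝ) / k) := by
  have : NeZero k := ⟨hk.ne'⟩
  have : Nonempty (Fin m) := ⟨⟨0, hm⟩⟩
  have hmul : ∀ j, (h' j : ZMod k) * h j = 1 := fun j => by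
    have := (ZMod.intCast_eq_intCast_iff _ _ k).2 (hinv j)
    push_cast at this
    rwa [mul_comm]
  simp only [← sawMod_natCast_mul_intCast]
  apply Complex.ofReal_injective
  push_cast
  calc _ = ∑ a ∈ univ.filter (fun a : Fin m → ZMod k => ∑ j, a j = 0),
          ∏ j, (sawMod (a j * (h j : ZMod k)) : ℂ) :=
        sum_filter_fin_eq_sum_filter_zmod fun a => ∏ j, (sawMod (a j * (h j : ZMod k)) : ℂ)
    _ = (Fintype.card (ZMod k) : ℂ)⁻¹ *
          ∑ c : ZMod k, ∏ j, ∑ x, (sawMod (x * (h j : ZMod k)) : ℂ) * stdAddChar (c * x) :=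
        sum_filter_sum_eq_zero_prod (ZMod.isPrimitive_stdAddChar k)
          fun j (x : ZMod k) => (sawMod (x * (h j : ZMod k)) : ℂ)
    _ = (Fintype.card (ZMod k) : ℂ)⁻¹ *
          ∑ c : ZMod k, ∏ j, ∑ y, (sawMod y : ℂ) * stdAddChar (y * (c * (h' j : ZMod k))) := by
        simp_rw [sum_mul_addChar_comp_mul_right stdAddChar (fun x => (sawMod x : ℂ)) (hmul _)]
    _ = _ := by
        rw [sum_prod_sum_sawMod_mul_stdAddChar h' fun j => .of_mul_eq_one _ (hmul j),
          ZMod.card, Fintype.card_fin, neg_I_div_two_pow_of_even hme]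
        ring

theorem zagier_higher_dedekind (k m : ℕ) (hk : 0 < k) (hm : 0 < m) (hme : Even m)
    (h h' : Fin m → ℤ) (hco : ∀ j, Int.gcd (h j) k = 1)
    (hinv : ∀ j, h j * h' j ≡ 1 [ZMOD (k : ℤ)]) :
    ∑ a ∈ Finset.univ.filter (fun a : Fin m → Fin k => (∑ j, (a j : ℕ)) % k = 0),
        ∏ j, saw ((a j : ℕ) * (h j : ℝ) / k)
      = (-1 : ℝ) ^ (m / 2) / (2 ^ m * k) *
          ∑ a ∈ Finset.Icc 1 (k - 1), ∏ j, cot (Real.pi * a * (h' j : ℝ) / k) :=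
  zagier_higher_dedekind_general k m hk hm hme h h' hinv
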